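/- arXiv:2003.04912 — 2 statements merged into one kernel-verified Lean document; each statement's English description precedes it below -/
import Mathlib

section
/- For every n ≥ 2 and k ≥ 2, the number p_{n,k} of pop-stacked permutations of size n with exactly k runs is even; consequently the total number p_n of pop-stacked permutations of size n is odd. -/
/-
Reversing the order of the runs is an involution on pop-stacked permutations: the overlap
condition makes every old boundary between adjacent runs a descent after the reversal, so the
runs of the image are the old runs in reverse order. The map thus preserves the number of runs,
and since distinct runs are disjoint it fixes only the permutations with at most one run, that
is, only the identity. An involution on a finite set has as many fixed points as elements,
modulo 2.
-/

/-- Split a list into maximal strictly decreasing contiguous blocks ("falls"). -/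
def fallSplit : List ℕ → List (List ℕ)
  | [] => []
  | a :: rest =>
    match fallSplit rest with
    | (b :: bs) :: gs => if b < a then (a :: b :: bs) :: gs else [a] :: (b :: bs) :: gs
    | gs => [a] :: gs

/-- Split a list into maximal strictly increasing contiguous blocks ("runs"). -/
def runSplit : List ℕ → List (List ℕ)
  | [] => []
  | a :: rest =>
    match runSplit rest with
    | (b :: bs) :: gs => if a < b then (a :: b :: bs) :: gs else [a] :: (b :: bs) :: gs
    | gs => [a] :: gs

/-- The flip transformation `T`: reverse every fall. -/
def flipT (l : List ℕ) : List ℕ := ((fallSplit l).map List.reverse).flatten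

/-- `l` is the one-line notation of a permutation of `{1, …, n}`. -/
def IsPermList (n : ℕ) (l : List ℕ) : Prop := l.Perm (List.range' 1 n)

/-- Every pair of adjacent runs overlaps: `min R₁ < max R₂` (pop-stacked condition). -/
def Overlapping (l : List ℕ) : Prop :=
  ∀ R₁ R₂ : List ℕ, [R₁, R₂] <:+: runSplit l → ∃ a ∈ R₁, ∃ b ∈ R₂, a < b

open List

section Sorted

variable {α : Type*} [Preorder α] {r : List α} {a x : α}

theorem List.IsChain.head?_le_of_mem (h : r.IsChain (· < ·)) (ha : a ∈ r.head?) (hx : x ∈ r) :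
    a ≤ x := by
  obtain rfl := Option.mem_some_iff.mp (head?_eq_some_head (ne_nil_of_mem hx) ▸ ha)
  exact ((isChain_iff_pairwise.mp h).imp le_of_lt).rel_head hx

theorem List.IsChain.le_getLast?_of_mem (h : r.IsChain (· < ·)) (ha : a ∈ r.getLast?)
    (hx : x ∈ r) : x ≤ a := by
  obtain rfl := Option.mem_some_iff.mp (getLast?_eq_some_getLast (ne_nil_of_mem hx) ▸ ha)
  exact ((isChain_iff_pairwise.mp h).imp le_of_lt).rel_getLast hx

end Sorted

theorem List.Nodup.length_le_one_of_reverse_eq {α : Type*} {L : List α} (hnd : L.Nodup)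
    (h : L.reverse = L) : L.length ≤ 1 := by
  by_contra! hlen
  have hends : L[0] = L[L.length - 1] := by
    rw [← getElem_of_eq h (by simp; omega), getElem_reverse]
    rfl
  have := (hnd.getElem_inj_iff).mp hends
  omega

theorem Function.Involutive.card_modEq_card_fixedPoints {α : Type*} [Finite α] {f : α → α}
    (hf : Function.Involutive f) : Nat.card α ≡ Nat.card (Function.fixedPoints f) [MOD 2] := by
  classical
  cases nonempty_fintype α
  let F : Function.End α := f
  have hF : F ^ 2 ^ 1 = 1 := funext hf
  simpa only [Nat.card_eq_fintype_card] using Equiv.Perm.card_fixedPoints_modEq hF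

theorem card_modEq_card_fixed_of_involutive_on {α : Type*} {P : α → Prop} [Finite {x // P x}]
    {f : α → α} (hmaps : ∀ x, P x → P (f x)) (hinv : ∀ x, P x → f (f x) = x) :
    Nat.card {x // P x} ≡ Nat.card {x // P x ∧ f x = x} [MOD 2] := by
  have hf : Function.Involutive (Subtype.map f hmaps) := fun x => Subtype.ext (hinv x.1 x.2)
  have e : Function.fixedPoints (Subtype.map f hmaps) ≃ {x // P x ∧ f x = x} :=
    (Equiv.subtypeEquivRight fun _ => Subtype.ext_iff).trans
      (Equiv.subtypeSubtypeEquivSubtypeInter P fun x => f x = x)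
  simpa only [Nat.card_congr e] using hf.card_modEq_card_fixedPoints

def IsRunDecomposition (L : List (List ℕ)) : Prop :=
  (∀ r ∈ L, r ≠ [] ∧ r.IsChain (· < ·)) ∧
    L.IsChain fun r s => ∀ a ∈ r.getLast?, ∀ b ∈ s.head?, b ≤ a

theorem isRunDecomposition_runSplit (l : List ℕ) : IsRunDecomposition (runSplit l) := by
  induction l with
  | nil => simp [runSplit, IsRunDecomposition]
  | cons a rest ih =>
    obtain ⟨hruns, hbdry⟩ := ih
    rcases h : runSplit rest with _ | ⟨_ | ⟨b, bs⟩, gs⟩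
    · simp [runSplit, h, IsRunDecomposition]
    · simp [h] at hruns
    · rw [h] at hruns hbdry
      by_cases hab : a < b
      · simp only [runSplit, h, if_pos hab]
        refine ⟨?_, ?_⟩
        · simp_all [isChain_cons_cons]
        · rw [isChain_cons] at hbdry ⊢
          simpa [getLast?_cons_cons] using hbdry
      · simp only [runSplit, h, if_neg hab]
        refine ⟨?_, isChain_cons_cons.mpr ⟨by simpa using hab, hbdry⟩⟩
        simp_all

theorem flatten_runSplit (l : List ℕ) : (runSplit l).flatten = l := by
  induction l with
  | nil => rfl
  | cons a rest ih =>
    conv_rhs => rw [← ih]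
    rcases h : runSplit rest with _ | ⟨_ | ⟨b, bs⟩, gs⟩ <;> simp only [runSplit, h]
    · rfl
    · rfl
    · split_ifs <;> rfl

theorem exists_runSplit_cons_eq (b : ℕ) (t : List ℕ) :
    ∃ bs gs, runSplit (b :: t) = (b :: bs) :: gs := by
  simp only [runSplit]
  split
  · split_ifs <;> exact ⟨_, _, rfl⟩
  · exact ⟨_, _, rfl⟩

theorem runSplit_append {r t : List ℕ} (hr : r ≠ []) (hinc : r.IsChain (· < ·))
    (hbdry : ∀ a ∈ r.getLast?, ∀ b ∈ t.head?, b ≤ a) :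
    runSplit (r ++ t) = r :: runSplit t := by
  induction r with
  | nil => exact absurd rfl hr
  | cons a r ih =>
    rcases r with _ | ⟨c, r⟩
    · rcases t with _ | ⟨b, t⟩
      · rfl
      · obtain ⟨bs, gs, h⟩ := exists_runSplit_cons_eq b t
        have hab : ¬ a < b := not_lt.mpr (hbdry a rfl b rfl)
        rw [cons_append, nil_append, runSplit.eq_2, h]
        simp [hab]
    · have hac : a < c := (isChain_cons_cons.mp hinc).1
      have ih' := ih (cons_ne_nil c r) (isChain_cons_cons.mp hinc).2
        (by simpa [getLast?_cons_cons] using hbdry)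
      rw [cons_append, runSplit.eq_2, ih']
      simp [hac]

theorem runSplit_flatten {L : List (List ℕ)} (hL : IsRunDecomposition L) :
    runSplit L.flatten = L := by
  induction L with
  | nil => rfl
  | cons r L ih =>
    obtain ⟨hruns, hbdry⟩ := hL
    rw [flatten_cons, runSplit_append (hruns r mem_cons_self).1 (hruns r mem_cons_self).2,
      ih ⟨fun s hs => hruns s (mem_cons_of_mem r hs), hbdry.tail⟩]
    rcases L with _ | ⟨s, L⟩
    · simp
    · obtain ⟨b, s, rfl⟩ := exists_cons_of_ne_nil (hruns s (by simp)).1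
      simpa using (isChain_cons_cons.mp hbdry).1

theorem IsRunDecomposition.reverse {L : List (List ℕ)} (hL : IsRunDecomposition L)
    (hover : ∀ r s, [r, s] <:+: L → ∃ a ∈ r, ∃ b ∈ s, a < b) :
    IsRunDecomposition L.reverse := by
  obtain ⟨hruns, -⟩ := hL
  refine ⟨fun r hr => hruns r (mem_reverse.mp hr), isChain_reverse.mpr ?_⟩
  refine (isChain_isInfix L).imp fun s r hsr a ha b hb => ?_
  obtain ⟨x, hx, y, hy, hxy⟩ := hover s r hsr
  have hb_le := (hruns s (hsr.subset (by simp))).2.head?_le_of_mem hb hx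
  have hy_le := (hruns r (hsr.subset (by simp))).2.le_getLast?_of_mem ha hy
  omega

theorem length_runSplit_le_one_iff {l : List ℕ} :
    (runSplit l).length ≤ 1 ↔ l.IsChain (· < ·) := by
  constructor
  · intro h
    have hflat := flatten_runSplit l
    have hruns := (isRunDecomposition_runSplit l).1
    rcases hL : runSplit l with _ | ⟨r, _ | ⟨s, L⟩⟩ <;> simp only [hL] at hflat h hruns
    · simp [← hflat]
    · simpa [← hflat] using (hruns r mem_cons_self).2
    · simp at h
  · intro h
    rcases l with _ | ⟨a, l⟩
    · simp [runSplit]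
    · have := runSplit_flatten (L := [a :: l]) ⟨by simpa using h, isChain_singleton _⟩
      simp_all

def reverseRuns (l : List ℕ) : List ℕ := (runSplit l).reverse.flatten

theorem reverseRuns_perm (l : List ℕ) : reverseRuns l ~ l := by
  simpa only [reverseRuns, flatten_runSplit] using (reverse_perm (runSplit l)).flatten

section Overlapping

variable {l : List ℕ} (ho : Overlapping l)
include ho

theorem runSplit_reverseRuns : runSplit (reverseRuns l) = (runSplit l).reverse :=
  runSplit_flatten ((isRunDecomposition_runSplit l).reverse ho)

theorem reverseRuns_reverseRuns : reverseRuns (reverseRuns l) = l := by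
  rw [reverseRuns, runSplit_reverseRuns ho, reverse_reverse, flatten_runSplit]

theorem overlapping_reverseRuns (hnd : l.Nodup) : Overlapping (reverseRuns l) := by
  intro r s hrs
  rw [runSplit_reverseRuns ho, ← reverse_infix, reverse_reverse] at hrs
  obtain ⟨hruns, hbdry⟩ := isRunDecomposition_runSplit l
  have hr := (hruns r (hrs.subset (by simp))).1
  have hs := (hruns s (hrs.subset (by simp))).1
  -- the boundary between `s` and `r` in `l` is a descent, strict because `l` has no repeats
  have hle : r.head hr ≤ s.getLast hs :=
    isChain_pair.mp (hbdry.infix hrs) _ (getLast?_eq_some_getLast hs) _ (head?_eq_some_head hr)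
  have hdisj : Disjoint s r := by
    have := (flatten_runSplit l ▸ hnd).sublist hrs.flatten.sublist
    exact disjoint_of_nodup_append (by simpa using this)
  have hne : r.head hr ≠ s.getLast hs := fun h => hdisj (getLast_mem hs) (h ▸ head_mem hr)
  exact ⟨_, head_mem hr, _, getLast_mem hs, lt_of_le_of_ne hle hne⟩

end Overlapping

theorem nodup_runSplit {l : List ℕ} (hnd : l.Nodup) : (runSplit l).Nodup := by
  rw [← flatten_runSplit l, nodup_flatten] at hnd
  refine hnd.2.imp_of_mem fun hr _ hdisj heq => ?_
  obtain ⟨x, hx⟩ := exists_mem_of_ne_nil _ ((isRunDecomposition_runSplit l).1 _ hr).1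
  exact hdisj hx (heq ▸ hx)

theorem reverseRuns_eq_self_iff {l : List ℕ} (hnd : l.Nodup) (ho : Overlapping l) :
    reverseRuns l = l ↔ (runSplit l).length ≤ 1 := by
  constructor
  · intro h
    refine (nodup_runSplit hnd).length_le_one_of_reverse_eq ?_
    rw [← runSplit_reverseRuns ho, h]
  · intro h
    rw [reverseRuns]
    conv_rhs => rw [← flatten_runSplit l]
    match runSplit l, h with
    | [], _ => rfl
    | [_], _ => rfl

theorem finite_isPermList (n : ℕ) : {l | IsPermList n l}.Finite :=
  (range' 1 n).permutations.finite_toSet.subset fun _ hl => mem_permutations.mpr hl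

theorem IsPermList.nodup {n : ℕ} {l : List ℕ} (hl : IsPermList n l) : l.Nodup :=
  hl.nodup_iff.mpr nodup_range'

theorem isPermList_and_isChain_lt_iff {n : ℕ} {l : List ℕ} :
    IsPermList n l ∧ l.IsChain (· < ·) ↔ l = range' 1 n := by
  constructor
  · rintro ⟨hl, hinc⟩
    exact hl.eq_of_pairwise (fun a _ _ _ hab hba => absurd (hab.trans hba) (lt_irrefl a))
      (isChain_iff_pairwise.mp hinc) (pairwise_lt_range' 1)
  · rintro rfl
    exact ⟨Perm.refl _, isChain_iff_pairwise.mpr (pairwise_lt_range' 1)⟩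

theorem overlapping_of_length_runSplit_le_one {l : List ℕ} (h : (runSplit l).length ≤ 1) :
    Overlapping l :=
  fun _ _ hrs => absurd (hrs.length_le.trans h) (by simp)

theorem card_popStacked_modEq_card_one_run (n : ℕ) {Q : List ℕ → Prop}
    (hQ : ∀ l, Overlapping l → Q l → Q (reverseRuns l)) :
    Nat.card {l // IsPermList n l ∧ Overlapping l ∧ Q l} ≡
      Nat.card {l // IsPermList n l ∧ Overlapping l ∧ Q l ∧ (runSplit l).length ≤ 1}
        [MOD 2] := by
  have : Finite {l // IsPermList n l ∧ Overlapping l ∧ Q l} :=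
    ((finite_isPermList n).subset fun _ hl => hl.1).to_subtype
  have key := card_modEq_card_fixed_of_involutive_on
    (P := fun l => IsPermList n l ∧ Overlapping l ∧ Q l) (f := reverseRuns)
    (fun l ⟨hl, ho, hq⟩ =>
      ⟨(reverseRuns_perm l).trans hl, overlapping_reverseRuns ho hl.nodup, hQ l ho hq⟩)
    (fun l ⟨_, ho, _⟩ => reverseRuns_reverseRuns ho)
  have hfixed : ∀ l, (IsPermList n l ∧ Overlapping l ∧ Q l) ∧ reverseRuns l = l ↔
      IsPermList n l ∧ Overlapping l ∧ Q l ∧ (runSplit l).length ≤ 1 := fun l =>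
    ⟨fun ⟨⟨hl, ho, hq⟩, hfix⟩ =>
        ⟨hl, ho, hq, (reverseRuns_eq_self_iff hl.nodup ho).mp hfix⟩,
      fun ⟨hl, ho, hq, h1⟩ => ⟨⟨hl, ho, hq⟩, (reverseRuns_eq_self_iff hl.nodup ho).mpr h1⟩⟩
  rwa [Nat.card_congr (Equiv.subtypeEquivRight hfixed)] at key

/-- For n, k ≥ 2 the number of pop-stacked permutations of size n with exactly k runs is
even; consequently the total number of pop-stacked permutations of size n is odd. -/
theorem popStacked_parity :
    (∀ n k : ℕ, 2 ≤ n → 2 ≤ k →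
      Even (Nat.card {l : List ℕ //
        IsPermList n l ∧ Overlapping l ∧ (runSplit l).length = k})) ∧
    (∀ n : ℕ, 1 ≤ n →
      Odd (Nat.card {l : List ℕ // IsPermList n l ∧ Overlapping l})) := by
  constructor
  · intro n k _ hk
    have hcard := card_popStacked_modEq_card_one_run n (Q := fun l => (runSplit l).length = k)
      fun l ho hl => by rw [runSplit_reverseRuns ho, length_reverse, hl]
    have hnone : Nat.card {l // IsPermList n l ∧ Overlapping l ∧ (runSplit l).length = k ∧
        (runSplit l).length ≤ 1} = 0 :=
      Nat.card_eq_zero.mpr (.inl ⟨fun ⟨_, _, _, hl, h1⟩ => by omega⟩)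
    rw [hnone] at hcard
    exact Nat.even_iff.mpr hcard
  · intro n _
    have hcard := card_popStacked_modEq_card_one_run n (Q := fun _ => True) fun _ _ _ => trivial
    have hsorted : ∀ l, IsPermList n l ∧ Overlapping l ∧ True ∧ (runSplit l).length ≤ 1 ↔
        l = range' 1 n := fun l => by
      rw [← isPermList_and_isChain_lt_iff, ← length_runSplit_le_one_iff]
      exact ⟨fun ⟨hl, _, _, h1⟩ => ⟨hl, h1⟩,
        fun ⟨hl, h1⟩ => ⟨hl, overlapping_of_length_runSplit_le_one h1, trivial, h1⟩⟩
    rw [Nat.card_congr (Equiv.subtypeEquivRight hsorted),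
      Nat.card_unique (α := {l // l = range' 1 n})] at hcard
    simpa only [and_true] using Nat.odd_iff.mpr hcard
end

section
/- Fix 1 ≤ k ≤ n−1 and let shadow_k(π) ∈ {S,L}^n replace each value ≤ k of π by S and each value > k by L. For any permutation σ and any word λ ∈ X(k, n−k) with λ ≠ S^k L^{n−k}, let λ' be obtained from λ by replacing each occurrence of the factor LS by SL. If shadow_k(σ) ≼ λ, then shadow_k(T(σ)) ≼ λ'. -/
/-- The k-shadow of a permutation: replace each value ≤ k by S (= true) and each value
> k by L (= false). -/
def shadow (k : ℕ) (l : List ℕ) : List Bool := l.map fun v => decide (v ≤ k)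

/-- Replace every factor LS by SL (one step of T on shadows). -/
def stepLS : List Bool → List Bool
  | false :: true :: rest => true :: false :: stepLS rest
  | a :: rest => a :: stepLS rest
  | [] => []

/-- The partial order λ ≼ μ on {S,L}-words: each j-th S (from the left) of λ lies weakly
to the left of the j-th S of μ; equivalently every prefix of λ contains at least as many
S letters as the corresponding prefix of μ. -/
def SPrec (lam mu : List Bool) : Prop :=
  ∀ p : ℕ, (mu.take p).count true ≤ (lam.take p).count true

/-!
Write `u ≼ v` for `SPrec u v`. The step `λ ↦ λ'` is monotone for `≼`, so it suffices to show
`shadow_k (T σ) ≼ (shadow_k σ)'`. Cutting `σ` into its falls cuts `shadow_k σ` into blocks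
`Lᵃ Sᵇ`; consecutive falls are separated by an ascent, so no factor `LS` straddles two blocks
and `'` acts blockwise. On each block `T` produces `Sᵇ Lᵃ`, the `≼`-least word with `b`
letters `S`.
-/

theorem List.count_take_add_one {α : Type*} [DecidableEq α] (l : List α) (a : α) (p : ℕ) :
    (l.take (p + 1)).count a = (l.take p).count a + if l[p]? = some a then 1 else 0 := by
  rw [List.take_add_one, List.count_append]
  rcases l[p]? with _ | b
  · simp
  · by_cases hb : b = a <;> simp [hb]

theorem stepLS_cons (a : Bool) (w : List Bool) (h : ∀ r, a = false → w ≠ true :: r) :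
    stepLS (a :: w) = a :: stepLS w := by
  match a, w with
  | true, _ => rfl
  | false, [] => rfl
  | false, false :: _ => rfl
  | false, true :: r => exact absurd rfl (h r rfl)

theorem length_stepLS (w : List Bool) : (stepLS w).length = w.length := by
  induction w using stepLS.induct with
  | case1 _ ih => simp [stepLS, ih]
  | case2 a w h ih => simp [stepLS_cons a w h, ih]
  | case3 => rfl

theorem count_stepLS (w : List Bool) : (stepLS w).count true = w.count true := by
  induction w using stepLS.induct with
  | case1 _ ih => simp [stepLS, ih]
  | case2 a w h ih => simp only [stepLS_cons a w h, List.count_cons, ih]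
  | case3 => rfl

theorem stepLS_append (u v : List Bool) (h : ∀ x ∈ u.getLast?, ∀ y ∈ v.head?, y ≤ x) :
    stepLS (u ++ v) = stepLS u ++ stepLS v := by
  induction u using stepLS.induct with
  | case1 u ih =>
    simp only [List.cons_append, stepLS]
    rw [ih fun x hx => h x (List.mem_getLast?_cons (List.mem_getLast?_cons hx))]
  | case2 a u hu ih =>
    have hav : ∀ r, a = false → u ++ v ≠ true :: r := by
      rintro r rfl huv
      rcases u with _ | ⟨b, u⟩
      · exact absurd (h false rfl true (by simp_all)) (by decide)
      · obtain ⟨rfl, -⟩ := List.cons_eq_cons.mp huv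
        exact hu u rfl rfl
    simp only [List.cons_append]
    rw [stepLS_cons a _ hav, stepLS_cons a _ hu,
      ih fun x hx => h x (List.mem_getLast?_cons hx), List.cons_append]
  | case3 => rfl

/-- An `S` at position `p + 1` moves into position `p` exactly when it follows an `L`. -/
theorem count_take_stepLS_succ (w : List Bool) (p : ℕ) :
    ((stepLS w).take (p + 1)).count true =
      (w.take (if w[p]? = some false then p + 2 else p + 1)).count true := by
  induction w using stepLS.induct generalizing p with
  | case1 w ih =>
    rcases p with _ | _ | p
    · rfl
    · rfl
    · simp only [stepLS, List.getElem?_cons_succ, List.take_succ_cons, List.count_cons, ih]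
      split_ifs <;> simp_all [List.take_succ_cons]
  | case2 a w hw ih =>
    rw [stepLS_cons a w hw]
    rcases p with _ | p
    · rcases a <;> rcases w with _ | ⟨b, w⟩ <;> simp_all
    · simp only [List.take_succ_cons, List.count_cons, ih, List.getElem?_cons_succ]
      split_ifs <;> simp_all
  | case3 => simp [stepLS]

theorem SPrec.trans {u v w : List Bool} (huv : SPrec u v) (hvw : SPrec v w) : SPrec u w :=
  fun p => (hvw p).trans (huv p)

theorem SPrec.append {u v u' v' : List Bool} (h : SPrec u v) (h' : SPrec u' v')
    (hlen : u.length = v.length) : SPrec (u ++ u') (v ++ v') := by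
  intro p
  simp only [List.take_append, List.count_append, hlen]
  exact Nat.add_le_add (h p) (h' _)

theorem SPrec.stepLS {u w : List Bool} (h : SPrec u w) : SPrec (stepLS u) (stepLS w) := by
  rintro (_ | p)
  · simp
  simp only [count_take_stepLS_succ]
  split_ifs with hw hu hu
  · exact h _
  · -- `w` has an `L` at `p` and `u` does not: `u` has an `S` there, or has ended before `p`.
    have hw₁ : (w.take (p + 1)).count true = (w.take p).count true := by
      simp [List.count_take_add_one, hw]
    have hw₂ : (w.take (p + 2)).count true ≤ (w.take (p + 1)).count true + 1 := by
      rw [List.count_take_add_one]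
      split_ifs <;> omega
    rcases hup : u[p]? with _ | _ | _
    · have hlen : u.length ≤ p := List.getElem?_eq_none_iff.mp hup
      have := h (p + 2)
      rwa [List.take_of_length_le (l := u) (by omega),
        ← List.take_of_length_le (l := u) (by omega : u.length ≤ p + 1)] at this
    · exact absurd hup hu
    · have := h p
      rw [List.count_take_add_one u true p, hup, if_pos rfl]
      omega
  · exact (h _).trans ((List.take_sublist_take_left (Nat.le_succ _)).count_le true)
  · exact h _

theorem min_le_count_take_of_pairwise_ge {r : List Bool} (hr : r.Pairwise (· ≥ ·)) (p : ℕ) :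
    min p (r.count true) ≤ (r.take p).count true := by
  induction r generalizing p with
  | nil => simp
  | cons a r ih =>
    rw [List.pairwise_cons] at hr
    rcases p with _ | p
    · simp
    cases a with
    | true => simpa [List.count_cons] using ih hr.2 p
    | false =>
      have : r.count true = 0 := List.count_eq_zero.mpr fun hmem => absurd (hr.1 _ hmem) (by decide)
      simp [this]

theorem sPrec_of_pairwise_ge {r w : List Bool} (hr : r.Pairwise (· ≥ ·))
    (hw : w.count true ≤ r.count true) : SPrec r w := by
  intro p
  have hp : (w.take p).count true ≤ p :=
    (List.count_le_length ..).trans (List.length_take_le ..)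
  have hcount : (w.take p).count true ≤ w.count true := (List.take_sublist ..).count_le _
  exact le_trans (by omega) (min_le_count_take_of_pairwise_ge hr p)

theorem sPrec_reverse_stepLS {b : List Bool} (hb : b.Pairwise (· ≤ ·)) :
    SPrec b.reverse (stepLS b) :=
  sPrec_of_pairwise_ge (List.pairwise_reverse.mpr hb) (by rw [count_stepLS, List.count_reverse])

theorem sPrec_flatten_map_reverse_stepLS (bs : List (List Bool))
    (hsorted : ∀ b ∈ bs, b.Pairwise (· ≤ ·)) (hne : ∀ b ∈ bs, b ≠ [])
    (hjunction : bs.IsChain fun b c => ∀ x ∈ b.getLast?, ∀ y ∈ c.head?, y ≤ x) :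
    SPrec (bs.map List.reverse).flatten (stepLS bs.flatten) := by
  induction bs with
  | nil => intro p; simp [stepLS]
  | cons b bs ih =>
    simp only [List.forall_mem_cons] at hsorted hne
    have hjunction' : ∀ x ∈ b.getLast?, ∀ y ∈ bs.flatten.head?, y ≤ x := by
      rcases bs with _ | ⟨c, bs⟩
      · simp
      · obtain ⟨y, c, rfl⟩ := List.exists_cons_of_ne_nil (hne.2 _ List.mem_cons_self)
        simpa using (List.isChain_cons_cons.mp hjunction).1
    rw [List.flatten_cons, stepLS_append _ _ hjunction', List.map_cons, List.flatten_cons]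
    exact (sPrec_reverse_stepLS hsorted.1).append (ih hsorted.2 hne.2 hjunction.tail)
      (by rw [List.length_reverse, length_stepLS])

theorem flatten_fallSplit (l : List ℕ) : (fallSplit l).flatten = l := by
  induction l with
  | nil => rfl
  | cons a l ih =>
    rw [fallSplit]
    split <;> (try split_ifs) <;> simp_all

theorem ne_nil_of_mem_fallSplit {l b : List ℕ} (hb : b ∈ fallSplit l) : b ≠ [] := by
  induction l generalizing b with
  | nil => simp [fallSplit] at hb
  | cons a l ih =>
    rw [fallSplit] at hb
    split at hb
    next _ c cs gs hsplit =>
      rw [hsplit] at ih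
      split_ifs at hb <;> simp only [List.mem_cons] at hb <;> grind
    next => grind

theorem pairwise_gt_of_mem_fallSplit {l b : List ℕ} (hb : b ∈ fallSplit l) :
    b.Pairwise (· > ·) := by
  induction l generalizing b with
  | nil => simp [fallSplit] at hb
  | cons a l ih =>
    rw [fallSplit] at hb
    split at hb
    next _ c cs gs hsplit =>
      rw [hsplit] at ih
      split_ifs at hb with hca <;> simp only [List.mem_cons] at hb
      · rcases hb with rfl | hb
        · have hc := ih List.mem_cons_self
          refine List.Pairwise.cons (fun x hx => ?_) hc
          rcases List.mem_cons.mp hx with rfl | hx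
          · exact hca
          · exact (List.rel_of_pairwise_cons hc hx).trans hca
        · exact ih (List.mem_cons_of_mem _ hb)
      · rcases hb with rfl | hb
        · simp
        · exact ih (List.mem_cons.mpr hb)
    next =>
      rcases List.mem_cons.mp hb with rfl | hb
      · simp
      · exact ih hb

theorem isChain_fallSplit (l : List ℕ) :
    (fallSplit l).IsChain fun b c => ∀ x ∈ b.getLast?, ∀ y ∈ c.head?, x ≤ y := by
  induction l with
  | nil => simp [fallSplit]
  | cons a l ih =>
    rw [fallSplit]
    split
    next _ c cs gs hsplit =>
      rw [hsplit] at ih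
      split_ifs with hca
      · simpa [List.isChain_cons] using ih
      · exact ih.cons (by simpa using hca)
    next hnot =>
      have hnil : fallSplit l = [] := by
        match h : fallSplit l with
        | [] => rfl
        | [] :: gs => exact absurd rfl (ne_nil_of_mem_fallSplit (h ▸ List.mem_cons_self))
        | (c :: cs) :: gs => exact absurd h (hnot c cs gs)
      simp [hnil]

theorem sPrec_shadow_flipT_stepLS_shadow (k : ℕ) (σ : List ℕ) :
    SPrec (shadow k (flipT σ)) (stepLS (shadow k σ)) := by
  have hanti : Antitone fun v : ℕ => decide (v ≤ k) := fun x y hxy =>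
    Bool.le_iff_imp.mpr fun hy => by simp only [decide_eq_true_eq] at hy ⊢; omega
  set bs := (fallSplit σ).map (shadow k)
  have hσ : shadow k σ = bs.flatten := by
    conv_lhs => rw [← flatten_fallSplit σ]
    exact List.map_flatten ..
  have hT : shadow k (flipT σ) = (bs.map List.reverse).flatten := by
    simp only [flipT, shadow, bs, List.map_flatten, List.map_map, Function.comp_def,
      List.map_reverse]
  rw [hσ, hT]
  refine sPrec_flatten_map_reverse_stepLS bs ?_ ?_ ?_
  · simp only [bs, List.forall_mem_map, shadow, List.pairwise_map]
    exact fun b hb => (pairwise_gt_of_mem_fallSplit hb).imp fun hxy => hanti hxy.le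
  · simp only [bs, List.forall_mem_map, shadow, ne_eq, List.map_eq_nil_iff]
    exact fun b hb => ne_nil_of_mem_fallSplit hb
  · simp only [bs, List.isChain_map]
    refine (isChain_fallSplit σ).imp fun b c hbc x hx y hy => ?_
    simp only [shadow, List.getLast?_map, List.head?_map, Option.mem_map] at hx hy
    obtain ⟨x, hx, rfl⟩ := hx
    obtain ⟨y, hy, rfl⟩ := hy
    exact hanti (hbc x hx y hy)

theorem shadow_flipT_mono_general (k : ℕ) (σ : List ℕ) (lam : List Bool)
    (h : SPrec (shadow k σ) lam) :
    SPrec (shadow k (flipT σ)) (stepLS lam) :=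
  (sPrec_shadow_flipT_stepLS_shadow k σ).trans h.stepLS

/-- If shadow_k(σ) ≼ λ with λ ≠ Sᵏ Lⁿ⁻ᵏ, then shadow_k(T(σ)) ≼ λ', where λ' replaces
every factor LS of λ by SL. -/
theorem shadow_flipT_mono (n k : ℕ) (hk1 : 1 ≤ k) (hk2 : k ≤ n - 1)
    (σ : List ℕ) (hσ : IsPermList n σ)
    (lam : List Bool) (hlen : lam.length = n) (hcount : lam.count true = k)
    (hne : lam ≠ List.replicate k true ++ List.replicate (n - k) false)
    (h : SPrec (shadow k σ) lam) :
    SPrec (shadow k (flipT σ)) (stepLS lam) :=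
  shadow_flipT_mono_general k σ lam h
end
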